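/- arXiv:1505.00049 — 6 statements merged into one kernel-verified Lean document; each statement's English description precedes it below -/
import Mathlib

section
/- For every density operator ρ in the spin-s representation, writing v_k = Var_ρ(L_k) for k = 1,2,3, one has v₁v₂ + v₂v₃ + v₃v₁ ≥ (1/4)(s(s+1) − (v₁ + v₂ + v₃)). -/
open Matrix Complex
open scoped ComplexOrder

noncomputable section

/-- spin value s = j/2 -/
def sVal (j : ℕ) : ℝ := (j : ℝ) / 2

/-- m-value of the k-th basis vector: m = k - s -/
def mVal (j : ℕ) (k : Fin (j + 1)) : ℝ := (k : ℝ) - sVal j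

/-- L₃ -/
def L3 (j : ℕ) : Matrix (Fin (j + 1)) (Fin (j + 1)) ℂ :=
  Matrix.diagonal (fun k => (mVal j k : ℂ))

/-- raising operator L₊ -/
def Lp (j : ℕ) : Matrix (Fin (j + 1)) (Fin (j + 1)) ℂ :=
  Matrix.of fun i k =>
    if (i : ℕ) = (k : ℕ) + 1 then
      ((Real.sqrt (sVal j * (sVal j + 1) - mVal j k * (mVal j k + 1)) : ℝ) : ℂ)
    else 0

/-- lowering operator L₋ -/
def Lm (j : ℕ) : Matrix (Fin (j + 1)) (Fin (j + 1)) ℂ :=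
  Matrix.of fun i k =>
    if (i : ℕ) + 1 = (k : ℕ) then
      ((Real.sqrt (sVal j * (sVal j + 1) - mVal j k * (mVal j k - 1)) : ℝ) : ℂ)
    else 0

/-- L₁ = (L₊ + L₋)/2 -/
def L1 (j : ℕ) : Matrix (Fin (j + 1)) (Fin (j + 1)) ℂ := (1 / 2 : ℂ) • (Lp j + Lm j)

/-- L₂ = (L₊ − L₋)/(2i) -/
def L2 (j : ℕ) : Matrix (Fin (j + 1)) (Fin (j + 1)) ℂ :=
  (1 / (2 * Complex.I)) • (Lp j - Lm j)

/-- density operator -/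
def IsDensity {j : ℕ} (ρ : Matrix (Fin (j + 1)) (Fin (j + 1)) ℂ) : Prop :=
  ρ.PosSemidef ∧ ρ.trace = 1

/-- expectation value -/
def expVal {j : ℕ} (ρ A : Matrix (Fin (j + 1)) (Fin (j + 1)) ℂ) : ℝ :=
  ((ρ * A).trace).re

/-- variance -/
def Var {j : ℕ} (ρ A : Matrix (Fin (j + 1)) (Fin (j + 1)) ℂ) : ℝ :=
  ((ρ * A ^ 2).trace).re - (((ρ * A).trace).re) ^ 2

/-- angular momentum component along a direction e ∈ ℝ³ -/
def dirL (j : ℕ) (e : Fin 3 → ℝ) : Matrix (Fin (j + 1)) (Fin (j + 1)) ℂ :=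
  (e 0 : ℂ) • L1 j + (e 1 : ℂ) • L2 j + (e 2 : ℂ) • L3 j

/-!
For each cyclic pair, `[L_a, L_b] = i L_c` gives Robertson's uncertainty relation
`Var L_a · Var L_b ≥ ⟨L_c⟩² / 4`: the map `t ↦ tr(ρ M†M)` with
`M = (L_a - ⟨L_a⟩) + i t (L_b - ⟨L_b⟩)` is a nonnegative real quadratic whose discriminant is
`⟨L_c⟩² - 4 Var L_a Var L_b`. Summing the three relations and using the Casimir identity
`L₁² + L₂² + L₃² = s(s+1)`, i.e. `Σ ⟨L_k⟩² = s(s+1) - Σ Var L_k`, gives the claim.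
-/

lemma Fin.sum_ite_val_eq {M : Type*} [AddCommMonoid M] {n : ℕ} (c : ℕ)
    (f : Fin n → M) :
    ∑ k : Fin n, (if (k : ℕ) = c then f k else 0) = if h : c < n then f ⟨c, h⟩ else 0 := by
  split_ifs with h
  · rw [Finset.sum_eq_single ⟨c, h⟩ (fun k _ hk => if_neg fun hkc => hk (Fin.ext hkc))
      (fun h' => absurd (Finset.mem_univ _) h'), if_pos rfl]
  · exact Finset.sum_eq_zero fun k _ => if_neg (by omega)

lemma Fin.sum_ite_eq_val_add_one {M : Type*} [AddCommMonoid M] {n : ℕ} (c : ℕ)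
    (f : Fin n → M) :
    ∑ k : Fin n, (if c = (k : ℕ) + 1 then f k else 0) =
      if h : 0 < c ∧ c - 1 < n then f ⟨c - 1, h.2⟩ else 0 := by
  split_ifs with h
  · have hc : c = c - 1 + 1 := by omega
    rw [Finset.sum_eq_single ⟨c - 1, h.2⟩
      (fun k _ hk => if_neg fun hkc => hk (Fin.ext (show (k : ℕ) = c - 1 by omega)))
      (fun h' => absurd (Finset.mem_univ _) h'), if_pos hc]
  · exact Finset.sum_eq_zero fun k _ => if_neg (by omega)

lemma one_div_two_mul_I : 1 / (2 * I) = -(I / 2) := by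
  field_simp
  rw [I_sq]; ring

section LadderOperators

/- `P`, `M`, `H` stand for `L₊`, `L₋`, `L₃`; the two combinations of `P` and `M` below are the
ones defining `L₁` and `L₂`. -/

variable {R : Type*} [Ring R] [Algebra ℂ R] {P M H : R}

lemma lie_ladderSum_ladderDiff (hPM : ⁅P, M⁆ = (2 : ℂ) • H) :
    ⁅(1 / 2 : ℂ) • (P + M), (1 / (2 * I)) • (P - M)⁆ = I • H := by
  rw [Ring.lie_def] at hPM ⊢
  simp only [smul_mul_smul_comm, add_mul, mul_add, sub_mul, mul_sub, one_div_two_mul_I]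
  linear_combination (norm := skip) (I / 2) • hPM
  match_scalars <;> ring

lemma lie_ladderDiff_cartan (hHP : ⁅H, P⁆ = P) (hHM : ⁅H, M⁆ = -M) :
    ⁅(1 / (2 * I)) • (P - M), H⁆ = I • ((1 / 2 : ℂ) • (P + M)) := by
  rw [Ring.lie_def] at hHP hHM ⊢
  simp only [smul_mul_assoc, mul_smul_comm, sub_mul, mul_sub, one_div_two_mul_I]
  linear_combination (norm := skip) (I / 2) • hHP - (I / 2) • hHM
  match_scalars <;> ring

lemma lie_cartan_ladderSum (hHP : ⁅H, P⁆ = P) (hHM : ⁅H, M⁆ = -M) :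
    ⁅H, (1 / 2 : ℂ) • (P + M)⁆ = I • ((1 / (2 * I)) • (P - M)) := by
  rw [Ring.lie_def] at hHP hHM ⊢
  simp only [smul_mul_assoc, mul_smul_comm, add_mul, mul_add, one_div_two_mul_I]
  linear_combination (norm := skip) (1 / 2 : ℂ) • hHP + (1 / 2 : ℂ) • hHM
  match_scalars <;> ring_nf <;> simp only [I_sq] <;> ring

lemma ladderSum_sq_add_ladderDiff_sq (P M : R) :
    ((1 / 2 : ℂ) • (P + M)) ^ 2 + ((1 / (2 * I)) • (P - M)) ^ 2 =
      (1 / 2 : ℂ) • (P * M + M * P) := by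
  simp only [sq, smul_mul_smul_comm, add_mul, mul_add, sub_mul, mul_sub, one_div_two_mul_I]
  match_scalars <;> ring_nf <;> simp only [I_sq] <;> ring

end LadderOperators

lemma re_trace_mul_conjTranspose_mul_nonneg {n : Type*} [Fintype n] {ρ : Matrix n n ℂ}
    (hρ : ρ.PosSemidef) (M : Matrix n n ℂ) : 0 ≤ (ρ * (Mᴴ * M)).trace.re := by
  rw [← Matrix.mul_assoc, trace_mul_comm, ← Matrix.mul_assoc]
  exact (Complex.nonneg_iff.mp (hρ.mul_mul_conjTranspose_same M).trace_nonneg).1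

lemma conjTranspose_add_I_smul_mul_self {n : Type*} [Fintype n] [DecidableEq n]
    {X Y : Matrix n n ℂ} (hX : X.IsHermitian) (hY : Y.IsHermitian) (t : ℝ) :
    (X + (I * t) • Y)ᴴ * (X + (I * t) • Y) = X ^ 2 + (t ^ 2 : ℂ) • Y ^ 2 + (I * t) • ⁅X, Y⁆ := by
  simp only [conjTranspose_add, conjTranspose_smul, hX.eq, hY.eq, star_mul', RCLike.star_def,
    conj_ofReal, conj_I, Ring.lie_def, sq, add_mul, mul_add, smul_mul_assoc, mul_smul_comm]
  match_scalars <;> ring_nf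
  rw [I_sq]; ring

lemma lie_sub_smul_one {n : Type*} [Fintype n] [DecidableEq n] (A B : Matrix n n ℂ) (a b : ℂ) :
    ⁅A - a • 1, B - b • 1⁆ = ⁅A, B⁆ := by
  simp only [Ring.lie_def, sub_mul, mul_sub, smul_mul_assoc, mul_smul_comm, one_mul, mul_one]
  module

lemma Matrix.IsHermitian.sub_ofReal_smul_one {n : Type*} [Fintype n] [DecidableEq n]
    {A : Matrix n n ℂ} (hA : A.IsHermitian) (a : ℝ) : (A - (a : ℂ) • 1).IsHermitian :=
  hA.sub (isHermitian_one.smul (by simp [IsSelfAdjoint]))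

lemma re_trace_mul_sub_expVal_sq {j : ℕ} {ρ : Matrix (Fin (j + 1)) (Fin (j + 1)) ℂ}
    (hρ : ρ.trace = 1) (A : Matrix (Fin (j + 1)) (Fin (j + 1)) ℂ) :
    (ρ * (A - (expVal ρ A : ℂ) • 1) ^ 2).trace.re = Var ρ A := by
  set a : ℂ := (expVal ρ A : ℂ) with ha
  have : (A - a • 1) ^ 2 = A ^ 2 - (2 * a) • A + a ^ 2 • 1 := by
    simp only [sq, sub_mul, mul_sub, smul_mul_assoc, mul_smul_comm, mul_one, one_mul]
    module
  rw [this, mul_add, mul_sub, trace_add, trace_sub, Matrix.mul_smul, Matrix.mul_smul, trace_smul,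
    trace_smul, mul_one, hρ, smul_eq_mul, smul_eq_mul, ha]
  simp only [Var, expVal, ← ofReal_pow, ← ofReal_ofNat, ← ofReal_mul, sub_re, add_re,
    re_ofReal_mul, mul_one, ofReal_re]
  ring

theorem robertson_uncertainty {j : ℕ} {ρ A B C : Matrix (Fin (j + 1)) (Fin (j + 1)) ℂ}
    (hρ : IsDensity ρ) (hA : A.IsHermitian) (hB : B.IsHermitian) (hAB : ⁅A, B⁆ = I • C) :
    expVal ρ C ^ 2 / 4 ≤ Var ρ A * Var ρ B := by
  have hquad (t : ℝ) : 0 ≤ Var ρ B * (t * t) + -expVal ρ C * t + Var ρ A := by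
    have hC : (ρ * ((I * t) • I • C)).trace = -(t * (ρ * C).trace : ℂ) := by
      rw [smul_smul, Matrix.mul_smul, trace_smul, smul_eq_mul, mul_right_comm I, I_mul_I]
      ring
    have h := re_trace_mul_conjTranspose_mul_nonneg hρ.1
      ((A - (expVal ρ A : ℂ) • 1) + (I * t) • (B - (expVal ρ B : ℂ) • 1))
    rw [conjTranspose_add_I_smul_mul_self (hA.sub_ofReal_smul_one _) (hB.sub_ofReal_smul_one _),
      lie_sub_smul_one, hAB, mul_add, mul_add, trace_add, trace_add, hC, Matrix.mul_smul,
      trace_smul, ← ofReal_pow, add_re, add_re, neg_re, smul_eq_mul, re_ofReal_mul, re_ofReal_mul,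
      re_trace_mul_sub_expVal_sq hρ.2, re_trace_mul_sub_expVal_sq hρ.2] at h
    rw [expVal]
    linarith
  have := discrim_le_zero hquad
  rw [discrim] at this
  linarith

lemma mVal_succ {j : ℕ} (k : Fin (j + 1)) (h : (k : ℕ) + 1 < j + 1) :
    mVal j ⟨k + 1, h⟩ = mVal j k + 1 := by
  simp only [mVal]; push_cast; ring

lemma mVal_pred {j : ℕ} (k : Fin (j + 1)) (h : 0 < (k : ℕ)) :
    mVal j ⟨k - 1, by omega⟩ = mVal j k - 1 := by
  simp only [mVal, Nat.cast_pred h]; ring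

lemma mVal_last (j : ℕ) : mVal j (Fin.last j) = sVal j := by
  simp only [mVal, sVal, Fin.val_last]; ring

lemma mVal_zero (j : ℕ) : mVal j 0 = -sVal j := by
  simp [mVal]

lemma sVal_mul_succ_sub_mVal_mul_succ_nonneg {j : ℕ} (k : Fin (j + 1)) :
    0 ≤ sVal j * (sVal j + 1) - mVal j k * (mVal j k + 1) := by
  have hk : (k : ℝ) ≤ j := by exact_mod_cast Nat.le_of_lt_succ k.isLt
  simp only [mVal, sVal]
  nlinarith [mul_nonneg (sub_nonneg.2 hk) (by positivity : (0 : ℝ) ≤ k + 1)]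

lemma sVal_mul_succ_sub_mVal_mul_pred_nonneg {j : ℕ} (k : Fin (j + 1)) :
    0 ≤ sVal j * (sVal j + 1) - mVal j k * (mVal j k - 1) := by
  have hk : (k : ℝ) ≤ j := by exact_mod_cast Nat.le_of_lt_succ k.isLt
  simp only [mVal, sVal]
  nlinarith [mul_nonneg (by linarith : (0 : ℝ) ≤ j - k + 1) (by positivity : (0 : ℝ) ≤ k)]

lemma Lm_mul_Lp (j : ℕ) : Lm j * Lp j =
    diagonal fun k => ((sVal j * (sVal j + 1) - mVal j k * (mVal j k + 1) : ℝ) : ℂ) := by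
  ext i l
  simp only [mul_apply, Lm, Lp, of_apply, mul_ite, mul_zero, diagonal_apply]
  rw [Fin.sum_ite_val_eq]
  rcases eq_or_ne i l with rfl | hil
  · rw [if_pos rfl]
    split_ifs with h h'
    · rw [mVal_succ _ h, add_sub_cancel_right, mul_comm (mVal j i + 1), ← ofReal_mul,
        Real.mul_self_sqrt (sVal_mul_succ_sub_mVal_mul_succ_nonneg i)]
    · exact absurd rfl h'
    · rw [show i = Fin.last j from Fin.ext (by rw [Fin.val_last]; omega), mVal_last]
      push_cast; ring
  · rw [if_neg hil]
    split_ifs with h h'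
    · exact absurd (Fin.ext (Nat.succ_injective h')) hil
    · rw [zero_mul]
    · rfl

lemma Lp_mul_Lm (j : ℕ) : Lp j * Lm j =
    diagonal fun k => ((sVal j * (sVal j + 1) - mVal j k * (mVal j k - 1) : ℝ) : ℂ) := by
  ext i l
  simp only [mul_apply, Lm, Lp, of_apply, ite_mul, zero_mul, diagonal_apply]
  rw [Fin.sum_ite_eq_val_add_one]
  rcases eq_or_ne i l with rfl | hil
  · rw [if_pos rfl]
    split_ifs with h h'
    · rw [mVal_pred _ h.1, sub_add_cancel, mul_comm (mVal j i - 1), ← ofReal_mul,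
        Real.mul_self_sqrt (sVal_mul_succ_sub_mVal_mul_pred_nonneg i)]
    · exact absurd (show (i : ℕ) - 1 + 1 = i by omega) h'
    · rw [show i = 0 from Fin.ext (by rw [Fin.val_zero]; omega), mVal_zero]
      push_cast; ring
  · rw [if_neg hil]
    split_ifs with h h'
    · exact absurd (Fin.ext (by simp only at h'; omega)) hil
    · rw [mul_zero]
    · rfl

lemma lie_L3_Lp (j : ℕ) : ⁅L3 j, Lp j⁆ = Lp j := by
  ext i k
  simp only [Ring.lie_def, Matrix.sub_apply, L3, diagonal_mul, mul_diagonal, Lp, of_apply]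
  split_ifs with h
  · rw [show mVal j i = mVal j k + 1 by simp only [mVal, h]; push_cast; ring]
    push_cast; ring
  · ring

lemma lie_L3_Lm (j : ℕ) : ⁅L3 j, Lm j⁆ = -Lm j := by
  ext i k
  simp only [Ring.lie_def, Matrix.sub_apply, Matrix.neg_apply, L3, diagonal_mul, mul_diagonal, Lm,
    of_apply]
  split_ifs with h
  · rw [show mVal j k = mVal j i + 1 by simp only [mVal, ← h]; push_cast; ring]
    push_cast; ring
  · ring

lemma lie_Lp_Lm (j : ℕ) : ⁅Lp j, Lm j⁆ = (2 : ℂ) • L3 j := by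
  rw [Ring.lie_def, Lp_mul_Lm, Lm_mul_Lp, L3, diagonal_sub, ← diagonal_smul]
  congr 1
  funext k
  rw [Pi.smul_apply, smul_eq_mul]
  push_cast; ring

lemma lie_L1_L2 (j : ℕ) : ⁅L1 j, L2 j⁆ = I • L3 j := by
  rw [L1, L2]
  exact lie_ladderSum_ladderDiff (lie_Lp_Lm j)

lemma lie_L2_L3 (j : ℕ) : ⁅L2 j, L3 j⁆ = I • L1 j := by
  rw [L1, L2]
  exact lie_ladderDiff_cartan (lie_L3_Lp j) (lie_L3_Lm j)

lemma lie_L3_L1 (j : ℕ) : ⁅L3 j, L1 j⁆ = I • L2 j := by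
  rw [L1, L2]
  exact lie_cartan_ladderSum (lie_L3_Lp j) (lie_L3_Lm j)

lemma Lp_conjTranspose (j : ℕ) : (Lp j)ᴴ = Lm j := by
  ext i k
  simp only [conjTranspose_apply, Lp, Lm, of_apply]
  split_ifs with h h' h'
  · rw [RCLike.star_def, conj_ofReal,
      show mVal j k = mVal j i + 1 by simp only [mVal, ← h']; push_cast; ring]
    ring_nf
  · omega
  · omega
  · exact star_zero _

lemma Lm_conjTranspose (j : ℕ) : (Lm j)ᴴ = Lp j := by
  rw [← Lp_conjTranspose, conjTranspose_conjTranspose]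

lemma L3_isHermitian (j : ℕ) : (L3 j).IsHermitian := by
  simp [L3, IsHermitian, diagonal_conjTranspose]

lemma L1_isHermitian (j : ℕ) : (L1 j).IsHermitian := by
  rw [IsHermitian, L1, conjTranspose_smul, conjTranspose_add, Lp_conjTranspose,
    Lm_conjTranspose, add_comm (Lm j)]
  simp

lemma L2_isHermitian (j : ℕ) : (L2 j).IsHermitian := by
  rw [IsHermitian, L2, conjTranspose_smul, conjTranspose_sub, Lp_conjTranspose,
    Lm_conjTranspose, ← neg_sub, smul_neg, ← neg_smul, one_div_two_mul_I]
  simp [neg_div]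

lemma L1_sq_add_L2_sq_add_L3_sq (j : ℕ) :
    L1 j ^ 2 + L2 j ^ 2 + L3 j ^ 2 = ((sVal j * (sVal j + 1) : ℝ) : ℂ) • 1 := by
  rw [L1, L2, ladderSum_sq_add_ladderDiff_sq, Lp_mul_Lm, Lm_mul_Lp, L3, sq, diagonal_mul_diagonal,
    diagonal_add, ← diagonal_smul, diagonal_add, smul_one_eq_diagonal]
  congr 1
  funext k
  rw [Pi.smul_apply, smul_eq_mul]
  push_cast; ring

lemma var_L1_add_var_L2_add_var_L3 {j : ℕ} {ρ : Matrix (Fin (j + 1)) (Fin (j + 1)) ℂ}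
    (hρ : ρ.trace = 1) :
    Var ρ (L1 j) + Var ρ (L2 j) + Var ρ (L3 j) =
      sVal j * (sVal j + 1) -
        (expVal ρ (L1 j) ^ 2 + expVal ρ (L2 j) ^ 2 + expVal ρ (L3 j) ^ 2) := by
  have h := congrArg (fun X => (ρ * X).trace.re) (L1_sq_add_L2_sq_add_L3_sq j)
  simp only [mul_add, trace_add, add_re, Matrix.mul_smul, mul_one, trace_smul, hρ, smul_eq_mul,
    ofReal_re] at h
  simp only [Var, expVal]
  linarith

theorem robertson_three_component_sum_general (j : ℕ)
    (ρ : Matrix (Fin (j + 1)) (Fin (j + 1)) ℂ) (hρ : IsDensity ρ) :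
    Var ρ (L1 j) * Var ρ (L2 j) + Var ρ (L2 j) * Var ρ (L3 j) +
        Var ρ (L3 j) * Var ρ (L1 j) ≥
      (1 / 4) * (sVal j * (sVal j + 1) -
        (Var ρ (L1 j) + Var ρ (L2 j) + Var ρ (L3 j))) := by
  have h12 := robertson_uncertainty hρ (L1_isHermitian j) (L2_isHermitian j) (lie_L1_L2 j)
  have h23 := robertson_uncertainty hρ (L2_isHermitian j) (L3_isHermitian j) (lie_L2_L3 j)
  have h31 := robertson_uncertainty hρ (L3_isHermitian j) (L1_isHermitian j) (lie_L3_L1 j)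
  have hsum := var_L1_add_var_L2_add_var_L3 (j := j) hρ.2
  linarith

/-- v₁v₂ + v₂v₃ + v₃v₁ ≥ (1/4)(s(s+1) − (v₁+v₂+v₃)). -/
theorem robertson_three_component_sum (j : ℕ) (hj : 0 < j)
    (ρ : Matrix (Fin (j + 1)) (Fin (j + 1)) ℂ) (hρ : IsDensity ρ) :
    Var ρ (L1 j) * Var ρ (L2 j) + Var ρ (L2 j) * Var ρ (L3 j) +
        Var ρ (L3 j) * Var ρ (L1 j) ≥
      (1 / 4) * (sVal j * (sVal j + 1) -
        (Var ρ (L1 j) + Var ρ (L2 j) + Var ρ (L3 j))) :=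
  robertson_three_component_sum_general j ρ hρ
end
end

section
/- For spin s = 1 (dimension d = 3), every density operator ρ satisfies Var_ρ(L₁) + Var_ρ(L₃) ≥ 7/16, and there exists a density operator attaining equality; i.e. the infimum of Var_ρ(L₁) + Var_ρ(L₃) over all density operators equals 7/16. -/
open Matrix Complex
open scoped ComplexOrder

noncomputable section

/-!
Since `Var ρ A = re tr (ρ (A - ⟨A⟩)²)` for a state `ρ`, it suffices that
`(L₁ - a)² + (L₃ - b)² - 7/16` is positive semidefinite for all real `a`, `b`, because the trace of
a product of two positive semidefinite matrices is nonnegative. With `p = a² + b² + 9/16` this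
matrix equals `(2p)⁻¹ (u uᴴ + 2 v vᴴ + w wᴴ)` for explicit real vectors `u`, `v`, `w`.
The bound is attained by the pure state `ψ = (√3, √10, √3)/4`.
-/

open scoped MatrixOrder in
theorem Matrix.PosSemidef.trace_mul_nonneg {𝕜 n : Type*} [RCLike 𝕜] [Fintype n] [DecidableEq n]
    {A B : Matrix n n 𝕜} (hA : A.PosSemidef) (hB : B.PosSemidef) : 0 ≤ (A * B).trace := by
  obtain ⟨C, rfl⟩ := CStarAlgebra.nonneg_iff_eq_star_mul_self.mp hB.nonneg
  rw [star_eq_conjTranspose, ← Matrix.mul_assoc, trace_mul_comm, ← Matrix.mul_assoc]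
  exact (hA.mul_mul_conjTranspose_same C).trace_nonneg

theorem Var_eq_re_trace_mul_sq_sub {j : ℕ} {ρ : Matrix (Fin (j + 1)) (Fin (j + 1)) ℂ}
    (hρ : ρ.trace = 1) (A : Matrix (Fin (j + 1)) (Fin (j + 1)) ℂ) :
    Var ρ A = (ρ * (A - (expVal ρ A : ℂ) • 1) ^ 2).trace.re := by
  have hsq : (A - (expVal ρ A : ℂ) • 1) ^ 2
      = A ^ 2 - ((2 * expVal ρ A : ℝ) : ℂ) • A + ((expVal ρ A ^ 2 : ℝ) : ℂ) • 1 := by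
    rw [sq, sq, sub_mul, mul_sub, mul_sub]
    simp only [Matrix.mul_smul, Matrix.smul_mul, Matrix.mul_one, Matrix.one_mul, smul_smul]
    push_cast
    module
  rw [hsq, Var, expVal]
  simp only [Matrix.mul_add, Matrix.mul_sub, Matrix.mul_smul, trace_add,
    trace_sub, trace_smul, hρ, smul_eq_mul, mul_one, Complex.add_re, Complex.sub_re,
    Complex.re_ofReal_mul, Complex.ofReal_re]
  ring

theorem L1_two_eq : L1 2 = !![0, ((√2 / 2 : ℝ) : ℂ), 0;
    ((√2 / 2 : ℝ) : ℂ), 0, ((√2 / 2 : ℝ) : ℂ);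
    0, ((√2 / 2 : ℝ) : ℂ), 0] := by
  ext i k
  fin_cases i <;> fin_cases k <;> norm_num [L1, Lp, Lm, sVal, mVal] <;> ring

theorem L3_two_eq : L3 2 = !![(-1 : ℂ), 0, 0; 0, 0, 0; 0, 0, 1] := by
  ext i k
  fin_cases i <;> fin_cases k <;> norm_num [L3, sVal, mVal]

theorem posSemidef_sq_L1_sub_add_sq_L3_sub_sub (a b : ℝ) :
    ((L1 2 - (a : ℂ) • 1) ^ 2 + (L3 2 - (b : ℂ) • 1) ^ 2 - (7 / 16 : ℂ) • 1).PosSemidef := by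
  obtain ⟨p, hp_def⟩ : ∃ p : ℝ, p = a ^ 2 + b ^ 2 + 9 / 16 := ⟨_, rfl⟩
  have hp : 0 < p := by rw [hp_def]; positivity
  let u : Fin 3 → ℂ := ![p + 2 * b, 0, -p + 2 * b]
  let v : Fin 3 → ℂ := ![-√2 * a, p, -√2 * a]
  let w : Fin 3 → ℂ := ![p - 3 / 2, 0, p - 3 / 2]
  have hgram : (L1 2 - (a : ℂ) • 1) ^ 2 + (L3 2 - (b : ℂ) • 1) ^ 2 - (7 / 16 : ℂ) • 1
      = ((2 * p)⁻¹ : ℝ) • (vecMulVec u (star u) + (2 : ℝ) • vecMulVec v (star v)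
          + vecMulVec w (star w)) := by
    have hs : ((√2 : ℝ) : ℂ) ^ 2 = 2 := by norm_cast; simp
    have hpC : (p : ℂ) = a ^ 2 + b ^ 2 + 9 / 16 := by rw [hp_def]; push_cast; ring
    have hp' : (p : ℂ) ≠ 0 := by exact_mod_cast hp.ne'
    rw [L1_two_eq, L3_two_eq]
    ext i k
    fin_cases i <;> fin_cases k <;>
    · simp [sq, Matrix.mul_apply, Fin.sum_univ_three, vecMulVec, u, v, w, map_ofNat]
      field_simp
      grind
  rw [hgram]
  exact ((((posSemidef_vecMulVec_self_star u).add
    ((posSemidef_vecMulVec_self_star v).smul zero_le_two)).add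
    (posSemidef_vecMulVec_self_star w)).smul (by positivity))

/-- The means in this state are `a = √15/4`, `b = 0`; there `p = 3/2`, so `w = 0`, and `ψ` is
orthogonal to `u` and `v`: the Gram certificate is tight. -/
def optimalState : Matrix (Fin (2 + 1)) (Fin (2 + 1)) ℂ :=
  let ψ : Fin 3 → ℂ := ![√3 / 4, √10 / 4, √3 / 4]
  vecMulVec ψ (star ψ)

theorem isDensity_optimalState : IsDensity optimalState := by
  refine ⟨posSemidef_vecMulVec_self_star _, ?_⟩
  have h3 : ((√3 : ℝ) : ℂ) ^ 2 = 3 := by norm_cast; simp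
  have h10 : ((√10 : ℝ) : ℂ) ^ 2 = 10 := by norm_cast; simp
  simp only [Nat.reduceAdd, optimalState, vecMulVec, Pi.star_apply, RCLike.star_def,
    trace_fin_three, of_apply, cons_val_zero, cons_val_one, cons_val, map_div₀, conj_ofReal,
    map_ofNat]
  linear_combination (1 / 8 : ℂ) * h3 + (1 / 16 : ℂ) * h10

theorem Var_optimalState_L1 : Var optimalState (L1 2) = 1 / 16 := by
  simp [Var, optimalState, L1_two_eq, sq, trace_fin_three, vecMulVec, Matrix.mul_apply,
    Fin.sum_univ_three, map_ofNat]
  ring_nf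
  norm_num

theorem Var_optimalState_L3 : Var optimalState (L3 2) = 3 / 8 := by
  simp [Var, optimalState, L3_two_eq, sq, trace_fin_three, vecMulVec, Matrix.mul_apply,
    Fin.sum_univ_three, map_ofNat]
  ring_nf
  norm_num

/-- for spin s = 1 the optimal lower bound on Var(L₁) + Var(L₃) is 7/16. -/
theorem two_component_bound_spin_one :
    (∀ ρ : Matrix (Fin (2 + 1)) (Fin (2 + 1)) ℂ, IsDensity ρ →
      7 / 16 ≤ Var ρ (L1 2) + Var ρ (L3 2)) ∧
    (∃ ρ : Matrix (Fin (2 + 1)) (Fin (2 + 1)) ℂ, IsDensity ρ ∧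
      Var ρ (L1 2) + Var ρ (L3 2) = 7 / 16) := by
  refine ⟨fun ρ ⟨hρ, htr⟩ => ?_, optimalState, isDensity_optimalState, ?_⟩
  · obtain ⟨a, ha⟩ : ∃ a, expVal ρ (L1 2) = a := ⟨_, rfl⟩
    obtain ⟨b, hb⟩ : ∃ b, expVal ρ (L3 2) = b := ⟨_, rfl⟩
    have hgap : Var ρ (L1 2) + Var ρ (L3 2) - 7 / 16
        = (ρ * ((L1 2 - (a : ℂ) • 1) ^ 2 + (L3 2 - (b : ℂ) • 1) ^ 2
            - (7 / 16 : ℂ) • 1)).trace.re := by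
      rw [Var_eq_re_trace_mul_sq_sub htr, Var_eq_re_trace_mul_sq_sub htr, ha, hb]
      simp only [Matrix.mul_add, Matrix.mul_sub, Matrix.mul_smul, trace_add,
        trace_sub, trace_smul, htr, smul_eq_mul, mul_one, Complex.add_re, Complex.sub_re]
      norm_num
    have hnonneg := hρ.trace_mul_nonneg (posSemidef_sq_L1_sub_add_sq_L3_sub_sub a b)
    linarith [(Complex.nonneg_iff.mp hnonneg).1]
  · rw [Var_optimalState_L1, Var_optimalState_L3]
    norm_num
end
end

section
/- For every unit vector ψ ∈ ℂ³ (i.e. |ψ₁|² + |ψ₂|² + |ψ₃|² = 1) there exist a phase φ ∈ ℝ, a rotation matrix R ∈ SO(3,ℝ), and a parameter t ∈ ℝ such that R applied (complex-linearly, entrywise with real entries) to e^{iφ}ψ equals the vector (cos t, i sin t, 0). -/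
/-!
Multiplying `ψ` by a phase `e^{iφ}` makes the complex bilinear square `∑ ψₖ²` real. Writing
`e^{iφ} ψ = a + i b` with `a b ∈ ℝ³`, its imaginary part is `2 a ⬝ b`, so `a ⊥ b`, and
`|a|² + |b|² = 1`. Complete the directions of `a` and `b` to an orthonormal pair `u, v`; the
matrix with rows `u, v, u × v` lies in `SO(3)` and sends `a + i b` to `(|a|, i |b|, 0)`, which is
`(cos t, i sin t, 0)` for a suitable `t`.
-/

open Complex Matrix

noncomputable section

section

variable {n : Type*} [Fintype n]

theorem dotProduct_self_nonneg (b : n → ℝ) : 0 ≤ b ⬝ᵥ b :=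
  Finset.sum_nonneg fun i _ => mul_self_nonneg (b i)

theorem dotProduct_self_inv_sqrt_smul {b : n → ℝ} (hb : b ≠ 0) :
    ((√(b ⬝ᵥ b))⁻¹ • b) ⬝ᵥ ((√(b ⬝ᵥ b))⁻¹ • b) = 1 := by
  have hbb : b ⬝ᵥ b ≠ 0 := dotProduct_self_eq_zero.not.mpr hb
  rw [smul_dotProduct, dotProduct_smul, smul_eq_mul, smul_eq_mul, ← mul_assoc, ← mul_inv,
    Real.mul_self_sqrt (dotProduct_self_nonneg b), inv_mul_cancel₀ hbb]

theorem im_sum_sq_eq_two_mul_dotProduct (χ : n → ℂ) :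
    (∑ k, χ k ^ 2).im = 2 * ((fun k => (χ k).re) ⬝ᵥ (fun k => (χ k).im)) := by
  simp only [im_sum, sq, mul_im, dotProduct, Finset.mul_sum]
  exact Finset.sum_congr rfl fun k _ => by ring

theorem dotProduct_re_add_dotProduct_im (χ : n → ℂ) :
    (fun k => (χ k).re) ⬝ᵥ (fun k => (χ k).re) + (fun k => (χ k).im) ⬝ᵥ (fun k => (χ k).im) =
      ∑ k, ‖χ k‖ ^ 2 := by
  simp only [dotProduct, ← Finset.sum_add_distrib, Complex.sq_norm, normSq_apply]

end

theorem exists_unit_orthogonal (x : Fin 3 → ℝ) : ∃ y, y ⬝ᵥ y = 1 ∧ x ⬝ᵥ y = 0 := by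
  by_cases hx : x 0 = 0 ∧ x 1 = 0
  · exact ⟨![1, 0, 0], by simp [dotProduct, Fin.sum_univ_three],
      by simp [dotProduct, Fin.sum_univ_three, hx.1]⟩
  · set w : Fin 3 → ℝ := ![-x 1, x 0, 0]
    have hw : w ≠ 0 := fun h =>
      hx ⟨by simpa [w] using congrFun h 1, by simpa [w] using congrFun h 0⟩
    have hxw : x ⬝ᵥ w = 0 := by simp [w, dotProduct, Fin.sum_univ_three, mul_comm]
    exact ⟨_, dotProduct_self_inv_sqrt_smul hw, by rw [dotProduct_smul, hxw, smul_zero]⟩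

theorem exists_unit_smul_eq_of_orthogonal {a b : Fin 3 → ℝ} (hab : a ⬝ᵥ b = 0) :
    ∃ v, v ⬝ᵥ v = 1 ∧ a ⬝ᵥ v = 0 ∧ b = √(b ⬝ᵥ b) • v := by
  rcases eq_or_ne b 0 with rfl | hb
  · obtain ⟨v, hv, hav⟩ := exists_unit_orthogonal a
    exact ⟨v, hv, hav, by simp⟩
  · have hr : √(b ⬝ᵥ b) ≠ 0 :=
      (Real.sqrt_pos.mpr ((dotProduct_self_nonneg b).lt_of_ne'
        (dotProduct_self_eq_zero.not.mpr hb))).ne'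
    exact ⟨_, dotProduct_self_inv_sqrt_smul hb, by rw [dotProduct_smul, hab, smul_zero],
      (smul_inv_smul₀ hr b).symm⟩

section

variable {u v : Fin 3 → ℝ}

def orthoFrame (u v : Fin 3 → ℝ) : Matrix (Fin 3) (Fin 3) ℝ :=
  Matrix.of ![u, v, u ⨯₃ v]

theorem orthoFrame_mulVec (u v w : Fin 3 → ℝ) :
    orthoFrame u v *ᵥ w = ![u ⬝ᵥ w, v ⬝ᵥ w, (u ⨯₃ v) ⬝ᵥ w] := by
  ext i; fin_cases i <;> rfl

theorem orthoFrame_transpose_mul (hu : u ⬝ᵥ u = 1) (hv : v ⬝ᵥ v = 1) (huv : u ⬝ᵥ v = 0) :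
    (orthoFrame u v)ᵀ * orthoFrame u v = 1 := by
  have hvu : v ⬝ᵥ u = 0 := by rwa [dotProduct_comm]
  have hcu : (u ⨯₃ v) ⬝ᵥ u = 0 := by rw [dotProduct_comm, dot_self_cross]
  have hcv : (u ⨯₃ v) ⬝ᵥ v = 0 := by rw [dotProduct_comm, dot_cross_self]
  have hcc : (u ⨯₃ v) ⬝ᵥ (u ⨯₃ v) = 1 := by rw [cross_dot_cross, hu, hv, huv, hvu]; ring
  rw [mul_eq_one_comm]
  ext i j
  change ![u, v, u ⨯₃ v] i ⬝ᵥ ![u, v, u ⨯₃ v] j = _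
  fin_cases i <;> fin_cases j <;>
    simp [hu, hv, huv, hvu, hcu, hcv, hcc, dotProduct_comm _ (u ⨯₃ v)]

theorem det_orthoFrame (hu : u ⬝ᵥ u = 1) (hv : v ⬝ᵥ v = 1) (huv : u ⬝ᵥ v = 0) :
    (orthoFrame u v).det = 1 := by
  have hvu : v ⬝ᵥ u = 0 := by rwa [dotProduct_comm]
  change Matrix.det ![u, v, u ⨯₃ v] = 1
  rw [← triple_product_eq_det, triple_product_permutation, triple_product_permutation,
    cross_dot_cross, hu, hv, huv, hvu]
  ring

theorem orthoFrame_mulVec_left (hu : u ⬝ᵥ u = 1) (huv : u ⬝ᵥ v = 0) :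
    orthoFrame u v *ᵥ u = ![1, 0, 0] := by
  rw [orthoFrame_mulVec, hu, dotProduct_comm, huv, dotProduct_comm, dot_self_cross]

theorem orthoFrame_mulVec_right (hv : v ⬝ᵥ v = 1) (huv : u ⬝ᵥ v = 0) :
    orthoFrame u v *ᵥ v = ![0, 1, 0] := by
  rw [orthoFrame_mulVec, hv, huv, dotProduct_comm, dot_cross_self]

end

theorem sum_ofReal_mul_re_add_im {m n : Type*} [Fintype n] (M : Matrix m n ℝ) (χ : n → ℂ) :
    (fun i => ∑ k, (M i k : ℂ) * χ k) =
      fun i => ((M *ᵥ fun k => (χ k).re) i : ℂ) + ((M *ᵥ fun k => (χ k).im) i : ℂ) * I := by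
  ext i
  simp only [mulVec, dotProduct, ofReal_sum, ofReal_mul, Finset.sum_mul, ← Finset.sum_add_distrib]
  exact Finset.sum_congr rfl fun k _ => by rw [mul_assoc, ← mul_add, re_add_im]

theorem exists_phase_sq_mul_im_eq_zero (z : ℂ) : ∃ φ : ℝ, (exp (φ * I) ^ 2 * z).im = 0 := by
  refine ⟨-z.arg / 2, ?_⟩
  have hphase : exp (↑(-z.arg / 2) * I) ^ 2 * exp (z.arg * I) = 1 := by
    rw [← exp_nat_mul, ← exp_add]; push_cast; ring_nf; exact exp_zero
  have hreal : exp (↑(-z.arg / 2) * I) ^ 2 * z = ‖z‖ := by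
    conv_lhs => arg 2; rw [← norm_mul_exp_arg_mul_I z]
    rw [mul_left_comm, hphase, mul_one]
  rw [hreal, ofReal_im]

theorem exists_cos_eq_sqrt_sin_eq_sqrt {A B : ℝ} (hA : 0 ≤ A) (hB : 0 ≤ B) (hAB : A + B = 1) :
    ∃ t, Real.cos t = √A ∧ Real.sin t = √B := by
  have hB1 : √B ≤ 1 := Real.sqrt_le_one.mpr (by linarith)
  refine ⟨Real.arcsin √B, ?_, Real.sin_arcsin (by linarith [Real.sqrt_nonneg B]) hB1⟩
  rw [Real.cos_arcsin, Real.sq_sqrt hB, ← hAB, add_sub_cancel_right]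

/-- every unit vector in ℂ³ can be brought, by a phase and a rotation in
    SO(3) (acting complex-linearly), to the normal form (cos t, i sin t, 0). -/
theorem normal_form_spin_one_vector (ψ : Fin 3 → ℂ)
    (hψ : ‖ψ 0‖ ^ 2 + ‖ψ 1‖ ^ 2 + ‖ψ 2‖ ^ 2 = 1) :
    ∃ (φ : ℝ) (R : Matrix (Fin 3) (Fin 3) ℝ) (t : ℝ),
      R.transpose * R = 1 ∧ R.det = 1 ∧
      (fun i => ∑ k, (R i k : ℂ) * (Complex.exp (φ * Complex.I) * ψ k)) =
        ![(Real.cos t : ℂ), (Real.sin t : ℂ) * Complex.I, 0] := by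
  obtain ⟨φ, hφ⟩ := exists_phase_sq_mul_im_eq_zero (∑ k, ψ k ^ 2)
  set χ : Fin 3 → ℂ := fun k => exp (φ * I) * ψ k
  set a : Fin 3 → ℝ := fun k => (χ k).re
  set b : Fin 3 → ℝ := fun k => (χ k).im
  have hab : a ⬝ᵥ b = 0 := by
    have : (∑ k, χ k ^ 2).im = 0 := by simpa [χ, mul_pow, Finset.mul_sum] using hφ
    linarith [im_sum_sq_eq_two_mul_dotProduct χ]
  have hnorm : a ⬝ᵥ a + b ⬝ᵥ b = 1 := by
    rw [dotProduct_re_add_dotProduct_im]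
    simpa [χ, norm_exp_ofReal_mul_I, Fin.sum_univ_three] using hψ
  obtain ⟨v, hv, hav, hbv⟩ := exists_unit_smul_eq_of_orthogonal hab
  obtain ⟨u, hu, hvu, hau⟩ := exists_unit_smul_eq_of_orthogonal (dotProduct_comm a v ▸ hav)
  have huv : u ⬝ᵥ v = 0 := by rwa [dotProduct_comm]
  obtain ⟨t, hcos, hsin⟩ := exists_cos_eq_sqrt_sin_eq_sqrt
    (dotProduct_self_nonneg a) (dotProduct_self_nonneg b) hnorm
  refine ⟨φ, orthoFrame u v, t, orthoFrame_transpose_mul hu hv huv, det_orthoFrame hu hv huv, ?_⟩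
  rw [sum_ofReal_mul_re_add_im]
  change (fun i => ((orthoFrame u v *ᵥ a) i : ℂ) + ((orthoFrame u v *ᵥ b) i : ℂ) * I) = _
  rw [hau, hbv, mulVec_smul, mulVec_smul, orthoFrame_mulVec_left hu huv,
    orthoFrame_mulVec_right hv huv, hcos, hsin]
  ext i
  fin_cases i <;> simp
end
end

section
/- Let r > 0, let m = (m₁,m₂,m₃) ∈ ℝ³, and let M = (M_{jk}) be a real symmetric 3×3 matrix. Then there exists a Borel probability measure μ on the sphere {x ∈ ℝ³ : ‖x‖ = r} with ∫ x_j dμ(x) = m_j and ∫ x_j x_k dμ(x) = M_{jk} for all j,k, if and only if tr M = r² and the matrix (M_{jk} − m_j m_k)_{j,k} is positive semidefinite. -/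
/-
Necessity: the trace of the second-moment matrix is the mean of `‖x‖² = r²`, and the quadratic
form of `M - m mᵀ` at `v` is the variance of `x ↦ ⟪v, x⟫`.

Sufficiency: write `M - m mᵀ = ∑ bᵢ bᵢᵀ`, so that `∑ ‖bᵢ‖² = r² - ‖m‖² =: c`. If `c = 0`, the
Dirac mass at `m` works. Otherwise the line `m + s bᵢ` crosses the sphere at two points on either
side of `m`, and the centred two-point measure on them has moments `(m, m mᵀ + (c / ‖bᵢ‖²) bᵢ bᵢᵀ)`.
Mixing these with weights `‖bᵢ‖² / c` gives `(m, M)`, because the realisable moment pairs form a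
convex set.
-/

open MeasureTheory Matrix Metric ProbabilityTheory

theorem Continuous.integrable_of_measure_compl_eq_zero {X E : Type*} [TopologicalSpace X]
    [T2Space X] [MeasurableSpace X] [OpensMeasurableSpace X] [NormedAddCommGroup E]
    {μ : Measure X} [IsFiniteMeasure μ] {K : Set X} (hK : IsCompact K) (hμK : μ Kᶜ = 0)
    {f : X → E} (hf : Continuous f) : Integrable f μ := by
  rw [← Measure.restrict_eq_self_of_ae_mem (mem_ae_iff.mpr hμK)]
  exact hf.continuousOn.integrableOn_compact hK

-- The roots are `s₁ = (t - β) / A > 0 > s₂ = -(t + β) / A` with `t = √(β² + A c)`; the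
-- lever-rule weights `w₁ = -s₂ / (s₁ - s₂)`, `w₂ = s₁ / (s₁ - s₂)` centre them, and then the
-- variance is `-s₁ s₂ = c / A`.
theorem exists_centered_twoPoint_on_roots {A β c : ℝ} (hA : 0 < A) (hc : 0 < c) :
    ∃ s₁ s₂ w₁ w₂ : ℝ, A * s₁ ^ 2 + 2 * β * s₁ = c ∧ A * s₂ ^ 2 + 2 * β * s₂ = c ∧
      0 ≤ w₁ ∧ 0 ≤ w₂ ∧ w₁ + w₂ = 1 ∧ w₁ * s₁ + w₂ * s₂ = 0 ∧
      w₁ * s₁ ^ 2 + w₂ * s₂ ^ 2 = c / A := by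
  set t := √(β ^ 2 + A * c)
  have ht2 : t ^ 2 = β ^ 2 + A * c := Real.sq_sqrt (by positivity)
  have hβt : |β| ≤ t := Real.abs_le_sqrt (by nlinarith)
  have ht : 0 < t := Real.sqrt_pos.mpr (by positivity)
  obtain ⟨hβt₁, hβt₂⟩ := abs_le.mp hβt
  refine ⟨(t - β) / A, -(t + β) / A, (t + β) / (2 * t), (t - β) / (2 * t),
    ?_, ?_, ?_, ?_, ?_, ?_, ?_⟩
  · field_simp
    linear_combination ht2
  · field_simp
    linear_combination ht2
  · exact div_nonneg (by linarith) (by positivity)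
  · exact div_nonneg (by linarith) (by positivity)
  · field_simp
    ring
  · field_simp
    ring
  · field_simp
    linear_combination 2 * t * ht2

variable {ι : Type*} [Fintype ι] {r : ℝ}

theorem EuclideanSpace.norm_toLp_sq (v : ι → ℝ) : ‖WithLp.toLp 2 v‖ ^ 2 = v ⬝ᵥ v := by
  rw [EuclideanSpace.real_norm_sq_eq]
  simp [dotProduct, sq]

def HasSphereMoments (r : ℝ) (m : ι → ℝ) (M : Matrix ι ι ℝ) : Prop :=
  ∃ μ : Measure (EuclideanSpace ℝ ι), IsProbabilityMeasure μ ∧ μ (sphere 0 r)ᶜ = 0 ∧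
    (∀ a, ∫ x, x a ∂μ = m a) ∧ ∀ a b, ∫ x, x a * x b ∂μ = M a b

namespace HasSphereMoments

variable {m : ι → ℝ} {M : Matrix ι ι ℝ}

theorem trace_eq (h : HasSphereMoments r m M) : M.trace = r ^ 2 := by
  obtain ⟨μ, _, hμ, -, h2⟩ := h
  have hnorm : (fun x : EuclideanSpace ℝ ι => ∑ a, x a * x a) =ᵐ[μ] fun _ => r ^ 2 := by
    filter_upwards [mem_ae_iff.mpr hμ] with x hx
    rw [← mem_sphere_zero_iff_norm.mp hx, EuclideanSpace.real_norm_sq_eq]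
    simp only [sq]
  calc M.trace = ∑ a, ∫ x, x a * x a ∂μ := by simp [trace, h2]
    _ = ∫ x, ∑ a, x a * x a ∂μ := (integral_finsetSum _ fun a _ => (by fun_prop : Continuous _)
        |>.integrable_of_measure_compl_eq_zero (isCompact_sphere 0 r) hμ).symm
    _ = r ^ 2 := by simp [integral_congr_ae hnorm]

theorem posSemidef_sub_vecMulVec (h : HasSphereMoments r m M) :
    (M - vecMulVec m m).PosSemidef := by
  obtain ⟨μ, _, hμ, h1, h2⟩ := h
  have hint {f : EuclideanSpace ℝ ι → ℝ} (hf : Continuous f) : Integrable f μ :=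
    hf.integrable_of_measure_compl_eq_zero (isCompact_sphere 0 r) hμ
  have hsymm (a b : ι) : M b a = M a b := by simp only [← h2, mul_comm]
  refine .of_dotProduct_mulVec_nonneg ?_ fun v => ?_
  · ext a b
    simp [hsymm, vecMulVec_apply, mul_comm]
  set X : EuclideanSpace ℝ ι → ℝ := fun x => ∑ a, v a * x a
  have hX : ∫ x, X x ∂μ = v ⬝ᵥ m := by
    rw [integral_finsetSum _ fun a _ => hint (by fun_prop)]
    simp only [integral_const_mul, h1, dotProduct]
  have hX2 : ∫ x, X x ^ 2 ∂μ = v ⬝ᵥ (M *ᵥ v) := by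
    have hsq (x : EuclideanSpace ℝ ι) : X x ^ 2 = ∑ a, v a * ∑ b, x a * x b * v b := by
      simp only [X, sq, Finset.sum_mul, Finset.mul_sum]
      exact Finset.sum_congr rfl fun a _ => Finset.sum_congr rfl fun b _ => by ring
    simp only [hsq, dotProduct, mulVec]
    rw [integral_finsetSum _ fun a _ => hint (by fun_prop)]
    refine Finset.sum_congr rfl fun a _ => ?_
    rw [integral_const_mul, integral_finsetSum _ fun b _ => hint (by fun_prop)]
    simp only [integral_mul_const, h2]
  have hvar : variance X μ = v ⬝ᵥ (M *ᵥ v) - (v ⬝ᵥ m) ^ 2 := by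
    rw [variance_eq_sub, ← hX, ← hX2]
    · rfl
    · exact (memLp_two_iff_integrable_sq (by fun_prop)).mpr (hint (by fun_prop))
  calc 0 ≤ variance X μ := variance_nonneg X μ
    _ = star v ⬝ᵥ ((M - vecMulVec m m) *ᵥ v) := by
      rw [hvar, star_trivial, sub_mulVec, dotProduct_sub, vecMulVec_mulVec, dotProduct_smul]
      simp [dotProduct_comm, sq]

theorem smul_add_smul {n : ι → ℝ} {N : Matrix ι ι ℝ}
    (h : HasSphereMoments r m M) (h' : HasSphereMoments r n N) {s t : ℝ} (hs : 0 ≤ s)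
    (ht : 0 ≤ t) (hst : s + t = 1) : HasSphereMoments r (s • m + t • n) (s • M + t • N) := by
  obtain ⟨μ, _, hμ, h1, h2⟩ := h
  obtain ⟨ν, _, hν, h1', h2'⟩ := h'
  have hint {ρ : Measure (EuclideanSpace ℝ ι)} [IsFiniteMeasure ρ] (hρ : ρ (sphere 0 r)ᶜ = 0)
      {f : EuclideanSpace ℝ ι → ℝ} (hf : Continuous f) : Integrable f ρ :=
    hf.integrable_of_measure_compl_eq_zero (isCompact_sphere 0 r) hρ
  have hmix {f : EuclideanSpace ℝ ι → ℝ} (hf : Continuous f) :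
      ∫ x, f x ∂(ENNReal.ofReal s • μ + ENNReal.ofReal t • ν) =
        s * ∫ x, f x ∂μ + t * ∫ x, f x ∂ν := by
    rw [integral_add_measure ((hint hμ hf).smul_measure ENNReal.ofReal_ne_top)
      ((hint hν hf).smul_measure ENNReal.ofReal_ne_top), integral_smul_measure,
      integral_smul_measure, ENNReal.toReal_ofReal hs, ENNReal.toReal_ofReal ht, smul_eq_mul,
      smul_eq_mul]
  refine ⟨ENNReal.ofReal s • μ + ENNReal.ofReal t • ν, ⟨?_⟩, ?_, fun a => ?_, fun a b => ?_⟩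
  · simp [← ENNReal.ofReal_add hs ht, hst]
  · simp [hμ, hν]
  · simp [hmix (by fun_prop : Continuous fun x : EuclideanSpace ℝ ι => x a), h1, h1']
  · simp [hmix (by fun_prop : Continuous fun x : EuclideanSpace ℝ ι => x a * x b), h2, h2']

end HasSphereMoments

theorem convex_setOf_hasSphereMoments :
    Convex ℝ {p : (ι → ℝ) × Matrix ι ι ℝ | HasSphereMoments r p.1 p.2} :=
  fun _ h _ h' _ _ hs ht hst => h.smul_add_smul h' hs ht hst

theorem hasSphereMoments_vecMulVec_self (hr : 0 ≤ r) {m : ι → ℝ} (hm : m ⬝ᵥ m = r ^ 2) :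
    HasSphereMoments r m (vecMulVec m m) := by
  have hnorm : ‖WithLp.toLp 2 m‖ = r := by
    rw [← sq_eq_sq₀ (norm_nonneg _) hr, EuclideanSpace.norm_toLp_sq, hm]
  refine ⟨Measure.dirac (WithLp.toLp 2 m), inferInstance, ?_, fun a => ?_, fun a b => ?_⟩
  · rw [Measure.dirac_apply' _ isClosed_sphere.measurableSet.compl, Set.indicator_of_notMem]
    simp [hnorm]
  · simp [integral_dirac]
  · simp [integral_dirac, vecMulVec_apply]

theorem hasSphereMoments_add_smul_vecMulVec (hr : 0 ≤ r) {m b : ι → ℝ}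
    (hm : m ⬝ᵥ m < r ^ 2) (hb : b ≠ 0) :
    HasSphereMoments r m (vecMulVec m m + ((r ^ 2 - m ⬝ᵥ m) / (b ⬝ᵥ b)) • vecMulVec b b) := by
  have hA : 0 < b ⬝ᵥ b := by simpa using dotProduct_self_star_pos_iff.mpr hb
  obtain ⟨s₁, s₂, w₁, w₂, hs₁, hs₂, hw₁, hw₂, hw, hmean, hvar⟩ :=
    exists_centered_twoPoint_on_roots (β := m ⬝ᵥ b) hA (sub_pos.mpr hm)
  have hpt {s : ℝ} (hs : (b ⬝ᵥ b) * s ^ 2 + 2 * (m ⬝ᵥ b) * s = r ^ 2 - m ⬝ᵥ m) :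
      HasSphereMoments r (m + s • b) (vecMulVec (m + s • b) (m + s • b)) := by
    refine hasSphereMoments_vecMulVec_self hr ?_
    simp only [add_dotProduct, dotProduct_add, smul_dotProduct, dotProduct_smul, smul_eq_mul,
      dotProduct_comm b m]
    linear_combination hs
  convert (hpt hs₁).smul_add_smul (hpt hs₂) hw₁ hw₂ hw using 1
  · ext a
    simp only [smul_add, Pi.add_apply, Pi.smul_apply, smul_eq_mul]
    linear_combination -(m a) * hw - b a * hmean
  · ext a a'
    simp only [Matrix.add_apply, vecMulVec_apply, Matrix.smul_apply, smul_eq_mul, Pi.add_apply,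
      Pi.smul_apply]
    linear_combination
      -(m a * m a') * hw - (m a * b a' + b a * m a') * hmean - b a * b a' * hvar

theorem hasSphereMoments_add_sum_vecMulVec (hr : 0 ≤ r) {κ : Type*} [Fintype κ]
    {m : ι → ℝ} (b : κ → ι → ℝ) (hm : m ⬝ᵥ m < r ^ 2)
    (hb : ∑ i, b i ⬝ᵥ b i = r ^ 2 - m ⬝ᵥ m) :
    HasSphereMoments r m (vecMulVec m m + ∑ i, vecMulVec (b i) (b i)) := by
  classical
  set c := r ^ 2 - m ⬝ᵥ m
  have hc : 0 < c := sub_pos.mpr hm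
  set s := Finset.univ.filter fun i => b i ⬝ᵥ b i ≠ 0
  have hw0 (i : κ) (_ : i ∈ s) : 0 ≤ b i ⬝ᵥ b i / c :=
    div_nonneg (Finset.sum_nonneg fun j _ => mul_self_nonneg (b i j)) hc.le
  have hw : ∑ i ∈ s, b i ⬝ᵥ b i / c = 1 := by
    rw [← Finset.sum_div, Finset.sum_filter_ne_zero, hb, div_self hc.ne']
  have hterm : ∀ i ∈ s, (b i ⬝ᵥ b i / c) •
      (vecMulVec m m + (c / b i ⬝ᵥ b i) • vecMulVec (b i) (b i)) =
        (b i ⬝ᵥ b i / c) • vecMulVec m m + vecMulVec (b i) (b i) := by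
    intro i hi
    rw [smul_add, smul_smul, div_mul_div_cancel₀ hc.ne', div_self (by simpa [s] using hi),
      one_smul]
  have hfilter : ∑ i ∈ s, vecMulVec (b i) (b i) = ∑ i, vecMulVec (b i) (b i) :=
    Finset.sum_filter_of_ne fun i _ h hi => h (by simp [dotProduct_self_eq_zero.mp hi])
  have hsum : ∑ i ∈ s, (b i ⬝ᵥ b i / c) •
      (m, vecMulVec m m + (c / b i ⬝ᵥ b i) • vecMulVec (b i) (b i)) =
        (m, vecMulVec m m + ∑ i, vecMulVec (b i) (b i)) := by
    refine Prod.ext ?_ ?_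
    · simp only [Prod.fst_sum, Prod.smul_fst, ← Finset.sum_smul, hw, one_smul]
    · simp only [Prod.snd_sum, Prod.smul_snd]
      rw [Finset.sum_congr rfl hterm, Finset.sum_add_distrib, ← Finset.sum_smul, hw, one_smul,
        hfilter]
  simpa only [hsum, Set.mem_ofPred_eq] using convex_setOf_hasSphereMoments.sum_mem hw0 hw
    (z := fun i => (m, vecMulVec m m + (c / b i ⬝ᵥ b i) • vecMulVec (b i) (b i)))
    fun i hi => hasSphereMoments_add_smul_vecMulVec (b := b i) hr hm (by simpa [s] using hi)

theorem hasSphereMoments_of_trace_eq (hr : 0 ≤ r) {m : ι → ℝ} {M : Matrix ι ι ℝ}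
    (htr : M.trace = r ^ 2) (hC : (M - vecMulVec m m).PosSemidef) : HasSphereMoments r m M := by
  obtain ⟨k, b, hb⟩ := posSemidef_iff_eq_sum_vecMulVec.mp hC
  simp only [star_trivial] at hb
  have hM : M = vecMulVec m m + ∑ i, vecMulVec (b i) (b i) := by
    rw [← hb, add_sub_cancel]
  have htr' : ∑ i, b i ⬝ᵥ b i = r ^ 2 - m ⬝ᵥ m := by
    rw [← htr, hM, trace_add, trace_sum]
    simp only [trace_vecMulVec, add_sub_cancel_left]
  have hA (i : Fin k) : 0 ≤ b i ⬝ᵥ b i := Finset.sum_nonneg fun j _ => mul_self_nonneg (b i j)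
  rw [hM]
  obtain hc | hc := (Finset.sum_nonneg fun i _ => hA i).lt_or_eq
  · exact hasSphereMoments_add_sum_vecMulVec hr b (by linarith) htr'
  · have hb0 (i : Fin k) : b i = 0 := dotProduct_self_eq_zero.mp <|
      (Finset.sum_eq_zero_iff_of_nonneg fun i _ => hA i).mp hc.symm i (Finset.mem_univ i)
    simpa [hb0] using hasSphereMoments_vecMulVec_self hr (m := m) (by linarith)

theorem sphere_moment_characterization_general (r : ℝ) (hr : 0 < r)
    (m : Fin 3 → ℝ) (M : Matrix (Fin 3) (Fin 3) ℝ) :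
    (∃ μ : Measure (EuclideanSpace ℝ (Fin 3)), IsProbabilityMeasure μ ∧
        μ (Metric.sphere (0 : EuclideanSpace ℝ (Fin 3)) r)ᶜ = 0 ∧
        (∀ a : Fin 3, ∫ x, x a ∂μ = m a) ∧
        (∀ a b : Fin 3, ∫ x, x a * x b ∂μ = M a b)) ↔
      (M.trace = r ^ 2 ∧
        (Matrix.of fun a b => M a b - m a * m b : Matrix (Fin 3) (Fin 3) ℝ).PosSemidef) := by
  change HasSphereMoments r m M ↔ M.trace = r ^ 2 ∧ (M - vecMulVec m m).PosSemidef
  exact ⟨fun h => ⟨h.trace_eq, h.posSemidef_sub_vecMulVec⟩,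
    fun h => hasSphereMoments_of_trace_eq hr.le h.1 h.2⟩

/-- characterization of the first and second moments of probability
    measures on a sphere of radius r: they are exactly the pairs (m, M) with
    tr M = r² and M − m mᵀ positive semidefinite. -/
theorem sphere_moment_characterization (r : ℝ) (hr : 0 < r)
    (m : Fin 3 → ℝ) (M : Matrix (Fin 3) (Fin 3) ℝ) (hM : M.IsSymm) :
    (∃ μ : Measure (EuclideanSpace ℝ (Fin 3)), IsProbabilityMeasure μ ∧
        μ (Metric.sphere (0 : EuclideanSpace ℝ (Fin 3)) r)ᶜ = 0 ∧
        (∀ a : Fin 3, ∫ x, x a ∂μ = m a) ∧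
        (∀ a b : Fin 3, ∫ x, x a * x b ∂μ = M a b)) ↔
      (M.trace = r ^ 2 ∧
        (Matrix.of fun a b => M a b - m a * m b : Matrix (Fin 3) (Fin 3) ℝ).PosSemidef) :=
  sphere_moment_characterization_general r hr m M
end

section
/- In the spin-s representation, for every m ∈ {−s, −s+1, …, s} the transition probability from the maximal-weight state |s⟩ under the rotation by angle π/2 about the 2-axis is binomial: |⟨m| exp(−i(π/2)L₂) |s⟩|² = 2^{−2s} · C(2s, s+m), where C denotes the binomial coefficient. -/
open Matrix Complex
open scoped ComplexOrder

noncomputable section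

/-! The matrix `G = -i L₂ = (L₋ - L₊) / 2` is real, and the last column of `exp (t G)` is the
solution of `x' = G x` with `x 0 = |s⟩`. The ladder identity
`√((j - i) (i + 1)) √C(j, i) = (i + 1) √C(j, i + 1)` shows that
`x i t = √C(j, i) cos (t / 2) ^ i sin (t / 2) ^ (j - i)` is that solution, and at `t = π / 2`
both `cos (t / 2)` and `sin (t / 2)` equal `1 / √2`. -/

namespace Matrix

variable {n 𝕜 : Type*} [Fintype n] [DecidableEq n] [RCLike 𝕜]

-- `exp` only depends on the topology, so any normed algebra structure on matrices will do.
attribute [local instance] Matrix.linftyOpNormedAddCommGroup Matrix.linftyOpNormedRing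
  Matrix.linftyOpNormedAlgebra

theorem hasDerivAt_exp_smul_mulVec (A : Matrix n n 𝕜) (v : n → 𝕜) (t : ℝ) :
    HasDerivAt (fun u : ℝ => NormedSpace.exp (u • A) *ᵥ v)
      (A *ᵥ (NormedSpace.exp (t • A) *ᵥ v)) t := by
  let applyTo : Matrix n n 𝕜 →L[ℝ] (n → 𝕜) := LinearMap.toContinuousLinearMap
    { toFun := fun M => M *ᵥ v
      map_add' := fun M N => add_mulVec M N v
      map_smul' := fun c M => smul_mulVec c M v }
  rw [mulVec_mulVec]
  exact applyTo.hasFDerivAt.comp_hasDerivAt t (hasDerivAt_exp_smul_const' (𝕂 := ℝ) A t)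

theorem exp_smul_mulVec_eq_of_hasDerivAt (A : Matrix n n 𝕜) {x : ℝ → n → 𝕜}
    (hx : ∀ t, HasDerivAt x (A *ᵥ x t) t) (t : ℝ) :
    NormedSpace.exp (t • A) *ᵥ x 0 = x t := by
  let mulA : (n → 𝕜) →L[ℝ] (n → 𝕜) :=
    LinearMap.toContinuousLinearMap ((mulVecLin A).restrictScalars ℝ)
  have hunique := ODE_solution_unique_univ (v := fun _ y => A *ᵥ y) (s := fun _ => Set.univ)
    (t₀ := 0) (fun _ => mulA.lipschitz.lipschitzOnWith)
    (fun t => ⟨hasDerivAt_exp_smul_mulVec A (x 0) t, trivial⟩) (fun t => ⟨hx t, trivial⟩)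
    (by simp)
  exact congrFun hunique t

end Matrix

lemma cast_choose_succ_mul {j i : ℕ} (hij : i ≤ j) :
    (j.choose (i + 1) : ℝ) * (i + 1) = j.choose i * (j - i) := by
  have h := congrArg (Nat.cast (R := ℝ)) (Nat.choose_succ_right_eq j i)
  push_cast [Nat.cast_sub hij] at h
  exact h

lemma sqrt_mul_sqrt_choose {j i : ℕ} (hij : i ≤ j) :
    √(((j : ℝ) - i) * (i + 1)) * √(j.choose i : ℝ) =
      (i + 1) * √(j.choose (i + 1) : ℝ) := by
  have hji : (0 : ℝ) ≤ j - i := by rw [sub_nonneg]; exact_mod_cast hij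
  rw [← sq_eq_sq₀ (by positivity) (by positivity), mul_pow, mul_pow,
    Real.sq_sqrt (by positivity), Real.sq_sqrt (by positivity), Real.sq_sqrt (by positivity)]
  linear_combination -(i + 1 : ℝ) * cast_choose_succ_mul hij

lemma sqrt_mul_sqrt_choose_succ {j i : ℕ} (hij : i ≤ j) :
    √(((j : ℝ) - i) * (i + 1)) * √(j.choose (i + 1) : ℝ) =
      (j - i) * √(j.choose i : ℝ) := by
  have hji : (0 : ℝ) ≤ j - i := by rw [sub_nonneg]; exact_mod_cast hij
  rw [← sq_eq_sq₀ (by positivity) (by positivity), mul_pow, mul_pow,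
    Real.sq_sqrt (by positivity), Real.sq_sqrt (by positivity), Real.sq_sqrt (by positivity)]
  linear_combination (j - i : ℝ) * cast_choose_succ_mul hij

lemma Lp_mulVec_zero (j : ℕ) (v : Fin (j + 1) → ℂ) : (Lp j *ᵥ v) 0 = 0 := by
  simp [Lp, mulVec, dotProduct]

lemma Lp_mulVec_succ (j : ℕ) (g : ℕ → ℂ) (i : ℕ) (hi : i + 1 < j + 1) :
    (Lp j *ᵥ fun k => g k) ⟨i + 1, hi⟩ = √(((j : ℝ) - i) * (i + 1)) * g i := by
  rw [mulVec, dotProduct, Fintype.sum_eq_single ⟨i, by omega⟩]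
  · simp only [Lp, of_apply, if_true, mVal, sVal]
    congr 3
    ring
  · intro k hk
    simp only [Lp, of_apply]
    rw [if_neg (fun h => hk (Fin.ext (by simp only at h ⊢; omega))), zero_mul]

lemma Lm_mulVec (j : ℕ) (g : ℕ → ℂ) (i : Fin (j + 1)) :
    (Lm j *ᵥ fun k => g k) i = √(((j : ℝ) - i) * (i + 1)) * g (i + 1) := by
  rw [mulVec, dotProduct]
  rcases lt_or_eq_of_le (Nat.lt_succ_iff.1 i.isLt) with hlt | hlast
  · rw [Fintype.sum_eq_single ⟨i + 1, by omega⟩]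
    · simp only [Lm, of_apply, if_true, mVal, sVal]
      push_cast
      congr 3
      ring
    · intro k hk
      simp only [Lm, of_apply]
      rw [if_neg (fun h => hk (Fin.ext (by simp only at h ⊢; omega))), zero_mul]
  · rw [Finset.sum_eq_zero, hlast]
    · simp
    · intro k _
      simp only [Lm, of_apply]
      rw [if_neg (by omega), zero_mul]

def rotatedAmplitude (j : ℕ) (t : ℝ) (i : ℕ) : ℝ :=
  √(j.choose i : ℝ) * Real.cos (t / 2) ^ i * Real.sin (t / 2) ^ (j - i)

def rotatedState (j : ℕ) (t : ℝ) : Fin (j + 1) → ℂ := fun i => rotatedAmplitude j t i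

lemma Lp_mulVec_rotatedState (j : ℕ) (t : ℝ) (i : Fin (j + 1)) :
    (Lp j *ᵥ rotatedState j t) i =
      (((i : ℕ) * √(j.choose i : ℝ) * Real.cos (t / 2) ^ ((i : ℕ) - 1) *
        Real.sin (t / 2) ^ (j - i + 1) : ℝ) : ℂ) := by
  obtain ⟨_ | i, hi⟩ := i
  · simpa using Lp_mulVec_zero j (rotatedState j t)
  · unfold rotatedState
    rw [Lp_mulVec_succ j (fun k => (rotatedAmplitude j t k : ℂ)) i hi, ← Complex.ofReal_mul]
    congr 1
    have hexp : j - (i + 1) + 1 = j - i := by omega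
    rw [rotatedAmplitude, Nat.add_sub_cancel, hexp]
    push_cast
    linear_combination (Real.cos (t / 2) ^ i * Real.sin (t / 2) ^ (j - i)) *
      sqrt_mul_sqrt_choose (j := j) (i := i) (by omega)

lemma Lm_mulVec_rotatedState (j : ℕ) (t : ℝ) (i : Fin (j + 1)) :
    (Lm j *ᵥ rotatedState j t) i =
      (((j - i : ℕ) * √(j.choose i : ℝ) * Real.cos (t / 2) ^ ((i : ℕ) + 1) *
        Real.sin (t / 2) ^ (j - i - 1) : ℝ) : ℂ) := by
  unfold rotatedState
  rw [Lm_mulVec j (fun k => (rotatedAmplitude j t k : ℂ)) i, ← Complex.ofReal_mul]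
  congr 1
  have hij : (i : ℕ) ≤ j := Nat.lt_succ_iff.1 i.isLt
  rw [rotatedAmplitude, Nat.sub_sub, Nat.cast_sub hij]
  linear_combination
    (Real.cos (t / 2) ^ ((i : ℕ) + 1) * Real.sin (t / 2) ^ (j - ((i : ℕ) + 1))) *
      sqrt_mul_sqrt_choose_succ hij

lemma hasDerivAt_rotatedAmplitude (j i : ℕ) (t : ℝ) :
    HasDerivAt (fun t => rotatedAmplitude j t i)
      (((j - i : ℕ) * √(j.choose i : ℝ) * Real.cos (t / 2) ^ (i + 1) *
          Real.sin (t / 2) ^ (j - i - 1) -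
        i * √(j.choose i : ℝ) * Real.cos (t / 2) ^ (i - 1) *
          Real.sin (t / 2) ^ (j - i + 1)) / 2) t := by
  have hhalf : HasDerivAt (fun t : ℝ => t / 2) (1 / 2) t := (hasDerivAt_id t).div_const 2
  have h : HasDerivAt (fun t => rotatedAmplitude j t i)
      (√(j.choose i : ℝ) * (i * Real.cos (t / 2) ^ (i - 1) * (-Real.sin (t / 2) * (1 / 2))) *
          Real.sin (t / 2) ^ (j - i) + √(j.choose i : ℝ) * Real.cos (t / 2) ^ i *
          ((j - i : ℕ) * Real.sin (t / 2) ^ (j - i - 1) * (Real.cos (t / 2) * (1 / 2)))) t :=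
    ((hhalf.cos.pow i).const_mul _).mul (hhalf.sin.pow (j - i))
  refine h.congr_deriv ?_
  rw [pow_succ (Real.cos (t / 2)) i, pow_succ (Real.sin (t / 2)) (j - i)]
  ring

def rotationGenerator (j : ℕ) : Matrix (Fin (j + 1)) (Fin (j + 1)) ℂ :=
  (1 / 2 : ℂ) • (Lm j - Lp j)

lemma smul_L2_eq_smul_rotationGenerator (j : ℕ) (t : ℝ) :
    (-t * Complex.I : ℂ) • L2 j = t • rotationGenerator j := by
  rw [L2, rotationGenerator, smul_smul, ← algebraMap_smul ℂ t, smul_smul,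
    Complex.coe_algebraMap, ← neg_sub, smul_neg, ← neg_smul]
  congr 1
  field_simp

lemma hasDerivAt_rotatedState (j : ℕ) (t : ℝ) :
    HasDerivAt (rotatedState j) (rotationGenerator j *ᵥ rotatedState j t) t := by
  refine hasDerivAt_pi.2 fun i => ?_
  rw [rotationGenerator, smul_mulVec, sub_mulVec, Pi.smul_apply, Pi.sub_apply,
    Lm_mulVec_rotatedState, Lp_mulVec_rotatedState, smul_eq_mul]
  refine (hasDerivAt_rotatedAmplitude j i t).ofReal_comp.congr_deriv ?_
  simp only [Complex.ofReal_div, Complex.ofReal_sub, Complex.ofReal_ofNat]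
  ring

lemma rotatedState_zero (j : ℕ) : rotatedState j 0 = Pi.single (Fin.last j) 1 := by
  funext i
  rcases eq_or_ne i (Fin.last j) with rfl | hi
  · simp [rotatedState, rotatedAmplitude]
  · have : (i : ℕ) < j := Fin.val_lt_last hi
    simp [rotatedState, rotatedAmplitude, hi, Nat.sub_ne_zero_of_lt this]

lemma exp_smul_rotationGenerator_apply_last (j : ℕ) (t : ℝ) (i : Fin (j + 1)) :
    NormedSpace.exp (t • rotationGenerator j) i (Fin.last j) = rotatedState j t i := by
  rw [← exp_smul_mulVec_eq_of_hasDerivAt _ (hasDerivAt_rotatedState j) t, rotatedState_zero,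
    mulVec_single_one, col_apply]

lemma rotatedAmplitude_pi_div_two_sq {j i : ℕ} (hij : i ≤ j) :
    rotatedAmplitude j (Real.pi / 2) i ^ 2 = (j.choose i : ℝ) / 2 ^ j := by
  have hhalf : (√2 / 2 : ℝ) ^ 2 = 2⁻¹ := by rw [div_pow, Real.sq_sqrt zero_le_two]; norm_num
  rw [rotatedAmplitude, show Real.pi / 2 / 2 = Real.pi / 4 by ring, Real.cos_pi_div_four,
    Real.sin_pi_div_four, mul_assoc, ← pow_add, Nat.add_sub_cancel' hij, mul_pow,
    Real.sq_sqrt (Nat.cast_nonneg _), ← pow_mul, mul_comm j 2, pow_mul, hhalf, inv_pow,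
    div_eq_mul_inv]

open NormedSpace in
theorem rotated_coherent_state_binomial_general (j : ℕ) (k : Fin (j + 1)) :
    ‖(NormedSpace.exp ((-(Real.pi / 2) * Complex.I : ℂ) • L2 j)) k (Fin.last j)‖ ^ 2 =
      (j.choose k : ℝ) / 2 ^ j := by
  rw [show (-(Real.pi / 2) * Complex.I : ℂ) = -((Real.pi / 2 : ℝ) : ℂ) * Complex.I by
      push_cast; rfl,
    smul_L2_eq_smul_rotationGenerator, exp_smul_rotationGenerator_apply_last, rotatedState,
    Complex.norm_real, Real.norm_eq_abs, sq_abs]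
  exact rotatedAmplitude_pi_div_two_sq (Nat.lt_succ_iff.1 k.isLt)

open NormedSpace in
/-- |⟨m| exp(−i(π/2)L₂) |s⟩|² = 2^{−2s} C(2s, s+m); here the basis
    vector of weight m is indexed by k = s + m ∈ {0, …, 2s = j}. -/
theorem rotated_coherent_state_binomial (j : ℕ) (hj : 0 < j) (k : Fin (j + 1)) :
    ‖(NormedSpace.exp ((-(Real.pi / 2) * Complex.I : ℂ) • L2 j)) k (Fin.last j)‖ ^ 2 =
      (j.choose k : ℝ) / 2 ^ j :=
  rotated_coherent_state_binomial_general j k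
end
end

section
/- The Maassen–Uffink bound for two orthogonal spin components converges to 1/2 as the spin grows: with j = 2s running over the positive integers, lim_{j→∞} ( j·ln 2 − ln C(j, ⌈j/2⌉) ) / ln(j+1) = 1/2. Equivalently, lim_{s→∞} −log_{2s+1}( 2^{−2s} C(2s, [s+1/2]) ) = 1/2, where [x] is the integer part of x and C(n,k) the binomial coefficient. -/
open Filter

private lemma cb_upper : ∀ n : ℕ, (Nat.centralBinom n : ℝ) * Real.sqrt (3 * n + 1) ≤ 4 ^ n := by
  intro n
  induction n with
  | zero => norm_num [Nat.centralBinom, Real.sqrt_one]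
  | succ n ih =>
    have key : ((n : ℝ) + 1) * (Nat.centralBinom (n + 1) : ℝ)
        = 2 * (2 * n + 1) * (Nat.centralBinom n : ℝ) := by
      exact_mod_cast congrArg (Nat.cast : ℕ → ℝ) (Nat.succ_mul_centralBinom_succ n)
    have hc : (0 : ℝ) < (Nat.centralBinom n : ℝ) := by
      exact_mod_cast Nat.centralBinom_pos n
    have hs1 : (0 : ℝ) ≤ Real.sqrt (3 * n + 1) := Real.sqrt_nonneg _
    have h1 : ((2 * (n : ℝ) + 1)) * Real.sqrt (3 * n + 4) ≤ (2 * n + 2) * Real.sqrt (3 * n + 1) := by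
      have e1 : ((2 * (n : ℝ) + 1)) * Real.sqrt (3 * n + 4)
          = Real.sqrt ((2 * n + 1) ^ 2 * (3 * n + 4)) := by
        rw [Real.sqrt_mul (by positivity), Real.sqrt_sq (by positivity)]
      have e2 : ((2 * (n : ℝ) + 2)) * Real.sqrt (3 * n + 1)
          = Real.sqrt ((2 * n + 2) ^ 2 * (3 * n + 1)) := by
        rw [Real.sqrt_mul (by positivity), Real.sqrt_sq (by positivity)]
      rw [e1, e2]
      apply Real.sqrt_le_sqrt
      nlinarith [Nat.cast_nonneg (α := ℝ) n]
    have hpos : (0 : ℝ) < (n : ℝ) + 1 := by positivity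
    have goal' : ((n : ℝ) + 1) * ((Nat.centralBinom (n + 1) : ℝ) * Real.sqrt (3 * (n + 1 : ℕ) + 1))
        ≤ ((n : ℝ) + 1) * 4 ^ (n + 1) := by
      have hrw : Real.sqrt (3 * ((n : ℝ) + 1) + 1) = Real.sqrt (3 * n + 4) := by ring_nf
      push_cast
      rw [← mul_assoc, key, hrw]
      calc 2 * (2 * (n : ℝ) + 1) * (Nat.centralBinom n : ℝ) * Real.sqrt (3 * n + 4)
          = (Nat.centralBinom n : ℝ) * (2 * ((2 * n + 1) * Real.sqrt (3 * n + 4))) := by ring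
        _ ≤ (Nat.centralBinom n : ℝ) * (2 * ((2 * n + 2) * Real.sqrt (3 * n + 1))) := by
            apply mul_le_mul_of_nonneg_left _ hc.le
            exact mul_le_mul_of_nonneg_left h1 (by norm_num)
        _ = (4 * (n : ℝ) + 4) * ((Nat.centralBinom n : ℝ) * Real.sqrt (3 * n + 1)) := by ring
        _ ≤ (4 * (n : ℝ) + 4) * 4 ^ n := by
            apply mul_le_mul_of_nonneg_left ih (by positivity)
        _ = ((n : ℝ) + 1) * 4 ^ (n + 1) := by
            rw [pow_succ]; ring
    exact le_of_mul_le_mul_left goal' hpos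

private lemma cb_lower : ∀ n : ℕ, 1 ≤ n → (4 : ℝ) ^ n ≤ 2 * Real.sqrt n * (Nat.centralBinom n : ℝ) := by
  intro n hn
  induction n, hn using Nat.le_induction with
  | base => norm_num [Nat.centralBinom, Real.sqrt_one]
  | succ n hn ih =>
    have key : ((n : ℝ) + 1) * (Nat.centralBinom (n + 1) : ℝ)
        = 2 * (2 * n + 1) * (Nat.centralBinom n : ℝ) := by
      exact_mod_cast congrArg (Nat.cast : ℕ → ℝ) (Nat.succ_mul_centralBinom_succ n)
    have hc : (0 : ℝ) < (Nat.centralBinom n : ℝ) := by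
      exact_mod_cast Nat.centralBinom_pos n
    have h1 : (2 * (n : ℝ) + 2) * Real.sqrt n ≤ (2 * n + 1) * Real.sqrt (n + 1) := by
      have e1 : ((2 * (n : ℝ) + 2)) * Real.sqrt n = Real.sqrt ((2 * n + 2) ^ 2 * n) := by
        rw [Real.sqrt_mul (by positivity), Real.sqrt_sq (by positivity)]
      have e2 : ((2 * (n : ℝ) + 1)) * Real.sqrt (n + 1)
          = Real.sqrt ((2 * n + 1) ^ 2 * (n + 1)) := by
        rw [Real.sqrt_mul (by positivity), Real.sqrt_sq (by positivity)]
      rw [e1, e2]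
      apply Real.sqrt_le_sqrt
      nlinarith [Nat.cast_nonneg (α := ℝ) n]
    have hpos : (0 : ℝ) < (n : ℝ) + 1 := by positivity
    have goal' : ((n : ℝ) + 1) * (4 : ℝ) ^ (n + 1)
        ≤ ((n : ℝ) + 1) * (2 * Real.sqrt ((n + 1 : ℕ) : ℝ) * (Nat.centralBinom (n + 1) : ℝ)) := by
      push_cast
      calc ((n : ℝ) + 1) * (4 : ℝ) ^ (n + 1) = (2 * n + 2) * 2 * 4 ^ n := by rw [pow_succ]; ring
        _ ≤ (2 * n + 2) * 2 * (2 * Real.sqrt n * (Nat.centralBinom n : ℝ)) := by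
            apply mul_le_mul_of_nonneg_left ih (by positivity)
        _ = 2 * ((2 * (n : ℝ) + 2) * Real.sqrt n) * (2 * (Nat.centralBinom n : ℝ)) := by ring
        _ ≤ 2 * ((2 * (n : ℝ) + 1) * Real.sqrt (n + 1)) * (2 * (Nat.centralBinom n : ℝ)) := by
            apply mul_le_mul_of_nonneg_right (mul_le_mul_of_nonneg_left h1 (by norm_num))
              (by positivity)
        _ = 2 * Real.sqrt ((n : ℝ) + 1) * (2 * (2 * n + 1) * (Nat.centralBinom n : ℝ)) := by ring
        _ = 2 * Real.sqrt ((n : ℝ) + 1) * (((n : ℝ) + 1) * (Nat.centralBinom (n + 1) : ℝ)) := by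
            rw [key]
        _ = ((n : ℝ) + 1) * (2 * Real.sqrt ((n : ℝ) + 1) * (Nat.centralBinom (n + 1) : ℝ)) := by
            ring
    exact le_of_mul_le_mul_left goal' hpos

private lemma B_le (j : ℕ) : ((j.choose ((j + 1) / 2)) : ℝ) * Real.sqrt j ≤ 2 ^ j := by
  rcases Nat.even_or_odd j with ⟨n, hn⟩ | ⟨n, hn⟩
  · subst hn
    have h2 : (n + n + 1) / 2 = n := by omega
    have hch : (n + n).choose ((n + n + 1) / 2) = Nat.centralBinom n := by
      rw [h2, Nat.centralBinom_eq_two_mul_choose, two_mul]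
    rw [hch]
    calc (Nat.centralBinom n : ℝ) * Real.sqrt (n + n : ℕ)
        ≤ (Nat.centralBinom n : ℝ) * Real.sqrt (3 * n + 1) := by
          apply mul_le_mul_of_nonneg_left _ (Nat.cast_nonneg _)
          apply Real.sqrt_le_sqrt; push_cast; nlinarith [Nat.cast_nonneg (α := ℝ) n]
      _ ≤ 4 ^ n := cb_upper n
      _ = 2 ^ (n + n : ℕ) := by rw [show (4:ℝ) = 2^2 by norm_num, ← pow_mul]; ring_nf
  · subst hn
    have h2 : (2 * n + 1 + 1) / 2 = n + 1 := by omega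
    rw [h2]
    have key : (2 * n + 1) * Nat.centralBinom n = (2 * n + 1).choose (n + 1) * (n + 1) := by
      have := Nat.add_one_mul_choose_eq (2 * n) n
      rwa [Nat.centralBinom_eq_two_mul_choose]
    -- choose (2n+1, n+1) ≤ 2 * centralBinom n
    have hle : (2 * n + 1).choose (n + 1) ≤ 2 * Nat.centralBinom n := by
      nlinarith [key, Nat.centralBinom_pos n]
    have hleR : ((2 * n + 1).choose (n + 1) : ℝ) ≤ 2 * (Nat.centralBinom n : ℝ) := by
      exact_mod_cast hle
    calc ((2 * n + 1).choose (n + 1) : ℝ) * Real.sqrt (2 * n + 1 : ℕ)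
        ≤ 2 * (Nat.centralBinom n : ℝ) * Real.sqrt (3 * n + 1) := by
          apply mul_le_mul hleR _ (Real.sqrt_nonneg _) (by positivity)
          apply Real.sqrt_le_sqrt; push_cast; nlinarith [Nat.cast_nonneg (α := ℝ) n]
      _ ≤ 2 * 4 ^ n := by
          rw [mul_assoc]
          exact mul_le_mul_of_nonneg_left (cb_upper n) (by norm_num)
      _ = 2 ^ (2 * n + 1 : ℕ) := by
          rw [show (4:ℝ) = 2^2 by norm_num, ← pow_mul, pow_succ]; ring

private lemma le_B (j : ℕ) (hj : 1 ≤ j) :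
    (2 : ℝ) ^ j ≤ 4 * Real.sqrt j * ((j.choose ((j + 1) / 2)) : ℝ) := by
  rcases Nat.even_or_odd j with ⟨n, hn⟩ | ⟨n, hn⟩
  · subst hn
    have hn1 : 1 ≤ n := by omega
    have h2 : (n + n + 1) / 2 = n := by omega
    have hch : (n + n).choose ((n + n + 1) / 2) = Nat.centralBinom n := by
      rw [h2, Nat.centralBinom_eq_two_mul_choose, two_mul]
    rw [hch]
    have hs : Real.sqrt n ≤ Real.sqrt (n + n : ℕ) := by
      apply Real.sqrt_le_sqrt; push_cast; have : (1:ℝ) ≤ (n:ℝ) := by exact_mod_cast hn1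
      linarith
    calc (2 : ℝ) ^ (n + n : ℕ) = 4 ^ n := by
          rw [show (4:ℝ) = 2^2 by norm_num, ← pow_mul]; ring_nf
      _ ≤ 2 * Real.sqrt n * (Nat.centralBinom n : ℝ) := cb_lower n hn1
      _ ≤ 4 * Real.sqrt (n + n : ℕ) * (Nat.centralBinom n : ℝ) := by
          apply mul_le_mul_of_nonneg_right _ (Nat.cast_nonneg _)
          nlinarith [Real.sqrt_nonneg (n : ℝ), Real.sqrt_nonneg ((n + n : ℕ) : ℝ)]
  · subst hn
    have h2 : (2 * n + 1 + 1) / 2 = n + 1 := by omega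
    rw [h2]
    have key : (2 * n + 1) * Nat.centralBinom n = (2 * n + 1).choose (n + 1) * (n + 1) := by
      have := Nat.add_one_mul_choose_eq (2 * n) n
      rwa [Nat.centralBinom_eq_two_mul_choose]
    have hge : Nat.centralBinom n ≤ (2 * n + 1).choose (n + 1) := by
      nlinarith [key, Nat.centralBinom_pos n, Nat.choose_pos (show n + 1 ≤ 2 * n + 1 by omega)]
    have hgeR : (Nat.centralBinom n : ℝ) ≤ ((2 * n + 1).choose (n + 1) : ℝ) := by
      exact_mod_cast hge
    rcases Nat.eq_zero_or_pos n with h0 | hn1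
    · subst h0; norm_num
    calc (2 : ℝ) ^ (2 * n + 1 : ℕ) = 2 * 4 ^ n := by
          rw [show (4:ℝ) = 2^2 by norm_num, ← pow_mul, pow_succ]; ring
      _ ≤ 2 * (2 * Real.sqrt n * (Nat.centralBinom n : ℝ)) := by
          apply mul_le_mul_of_nonneg_left (cb_lower n hn1) (by norm_num)
      _ = 4 * Real.sqrt n * (Nat.centralBinom n : ℝ) := by ring
      _ ≤ 4 * Real.sqrt (2 * n + 1 : ℕ) * ((2 * n + 1).choose (n + 1) : ℝ) := by
          apply mul_le_mul _ hgeR (Nat.cast_nonneg _) (by positivity)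
          apply mul_le_mul_of_nonneg_left _ (by norm_num)
          apply Real.sqrt_le_sqrt; push_cast; linarith [Nat.cast_nonneg (α := ℝ) n]

/-- the Maassen–Uffink constant for two orthogonal spin components tends
    to 1/2: lim_{j→∞} ( j ln 2 − ln C(j, ⌈j/2⌉) ) / ln(j+1) = 1/2.  (Here ⌈j/2⌉ = (j+1)/2
    in natural-number arithmetic.) -/
theorem maassen_uffink_limit :
    Tendsto (fun j : ℕ =>
        ((j : ℝ) * Real.log 2 - Real.log (j.choose ((j + 1) / 2))) /
          Real.log ((j : ℝ) + 1))
      atTop (nhds (1 / 2)) := by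
  have hL : Tendsto (fun j : ℕ => Real.log ((j : ℝ) + 1)) atTop atTop :=
    Real.tendsto_log_atTop.comp (tendsto_atTop_add_const_right _ 1 tendsto_natCast_atTop_atTop)
  have hg : Tendsto (fun j : ℕ => (Real.log ((j : ℝ) + 1))⁻¹) atTop (nhds 0) :=
    hL.inv_tendsto_atTop
  have hgl : Tendsto (fun j : ℕ => 1 / 2 - 3 / 2 * Real.log 2 * (Real.log ((j : ℝ) + 1))⁻¹)
      atTop (nhds (1 / 2)) := by
    have := (hg.const_mul (3 / 2 * Real.log 2)).const_sub (1 / 2)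
    simpa using this
  have hgu : Tendsto (fun j : ℕ => 1 / 2 + 2 * Real.log 2 * (Real.log ((j : ℝ) + 1))⁻¹)
      atTop (nhds (1 / 2)) := by
    have := (hg.const_mul (2 * Real.log 2)).const_add (1 / 2)
    simpa using this
  apply tendsto_of_tendsto_of_tendsto_of_le_of_le' hgl hgu
  all_goals
    rw [eventually_atTop]
    refine ⟨2, fun j hj => ?_⟩
  -- common facts
  all_goals
    have hj1 : (1:ℝ) ≤ (j : ℝ) := by exact_mod_cast Nat.one_le_of_lt hj
    have hBpos : 0 < j.choose ((j + 1) / 2) := Nat.choose_pos (by omega)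
    have hBposR : (0:ℝ) < (j.choose ((j + 1) / 2) : ℝ) := by exact_mod_cast hBpos
    have hLpos : 0 < Real.log ((j : ℝ) + 1) := Real.log_pos (by linarith)
    have hsj : Real.sqrt (j : ℝ) > 0 := Real.sqrt_pos.mpr (by linarith)
    have hlogsqrt : Real.log (Real.sqrt (j : ℝ)) = Real.log (j : ℝ) / 2 :=
      Real.log_sqrt (by linarith)
    have hlogj_le : Real.log (j : ℝ) ≤ Real.log ((j : ℝ) + 1) :=
      Real.log_le_log (by linarith) (by linarith)
    have hlogj_ge : Real.log ((j : ℝ) + 1) - Real.log 2 ≤ Real.log (j : ℝ) := by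
      have : Real.log ((j : ℝ) + 1) ≤ Real.log (2 * j) :=
        Real.log_le_log (by linarith) (by linarith)
      rw [Real.log_mul (by norm_num) (by linarith)] at this
      linarith
    have h2pos : (0:ℝ) ≤ Real.log 2 := Real.log_nonneg (by norm_num)
  -- lower bound
  · have h := B_le j
    have hlog : Real.log (((j.choose ((j + 1) / 2)) : ℝ) * Real.sqrt (j : ℝ))
        ≤ Real.log ((2:ℝ) ^ j) := Real.log_le_log (by positivity) h
    rw [Real.log_mul (ne_of_gt hBposR) (ne_of_gt hsj), Real.log_pow, hlogsqrt] at hlog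
    rw [le_div_iff₀ hLpos]
    have e : (1 / 2 - 3 / 2 * Real.log 2 * (Real.log ((j : ℝ) + 1))⁻¹) * Real.log ((j : ℝ) + 1)
        = Real.log ((j : ℝ) + 1) / 2 - 3 / 2 * Real.log 2 := by
      field_simp
    rw [e]
    linarith
  -- upper bound
  · have h := le_B j (by omega)
    have hlog : Real.log ((2:ℝ) ^ j)
        ≤ Real.log (4 * Real.sqrt (j : ℝ) * ((j.choose ((j + 1) / 2)) : ℝ)) :=
      Real.log_le_log (by positivity) h
    rw [Real.log_mul (by positivity) (ne_of_gt hBposR),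
      Real.log_mul (by norm_num) (ne_of_gt hsj), Real.log_pow, hlogsqrt] at hlog
    have h4 : Real.log 4 = 2 * Real.log 2 := by
      rw [show (4:ℝ) = 2^2 by norm_num, Real.log_pow]; push_cast; ring
    rw [div_le_iff₀ hLpos]
    calc (j : ℝ) * Real.log 2 - Real.log (j.choose ((j + 1) / 2))
        ≤ 2 * Real.log 2 + Real.log ((j : ℝ) + 1) / 2 := by
          rw [h4] at hlog; linarith
      _ = (1 / 2 + 2 * Real.log 2 * (Real.log ((j : ℝ) + 1))⁻¹) * Real.log ((j : ℝ) + 1) := by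
          field_simp; ring
end
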